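/- Let n ≥ 4 and let Kₙ be the complete graph on n vertices. Then the symmetric lift HL'₂(Kₙ) has n(n − 1) vertices, is regular of degree 2(n − 2), and the multiset of eigenvalues (with multiplicity) of its adjacency matrix over the reals is: 2(n − 2) with multiplicity 1, n − 2 with multiplicity n − 1, n − 4 with multiplicity n − 1, and −2 with multiplicity n(n − 3) + 1. -/

import Mathlib

open SimpleGraph

/-- The symmetric lift `HL'₂(G)`: vertices are ordered pairs `(u,v)` with `{u,v}` an edge of `G`;
distinct vertices `(u,v)` and `(x,y)` are adjacent iff `u = x` or `v = y`. -/
def symLift {V : Type*} (G : SimpleGraph V) : SimpleGraph {p : V × V // G.Adj p.1 p.2} where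
  Adj a b := a ≠ b ∧ (a.val.1 = b.val.1 ∨ a.val.2 = b.val.2)
  symm := ⟨fun _ _ h => ⟨h.1.symm, h.2.imp Eq.symm Eq.symm⟩⟩
  loopless := ⟨fun _ h => h.1 rfl⟩

/-!
`HL'₂(G)` is the line graph of the bipartite double cover of `G`. If `N` is the incidence matrix
of that cover (rows indexed by its edges), then `A + 2 = N Nᵀ` for the adjacency matrix `A` of
`HL'₂(G)`, while `Nᵀ N = [[D, A_G], [A_G, D]]` with `D` the degree matrix of `G`. A block matrix
`[[P, Q], [Q, P]]` has characteristic polynomial `χ(P + Q) χ(P - Q)`; for `G = Kₙ` both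
`P ± Q` are a rank-one matrix plus a scalar, with explicit spectra. Since `N Nᵀ` and `Nᵀ N` have
the same characteristic polynomial up to a power of `X`, shifting by `-2` gives the spectrum.
-/

open Matrix Polynomial

namespace Matrix

variable {R : Type*} [CommRing R] {n : Type*} [Fintype n] [DecidableEq n]

theorem det_fromBlocks_self (A B : Matrix n n R) :
    (fromBlocks A B B A).det = (A + B).det * (A - B).det := by
  have h : fromBlocks 1 1 0 1 * fromBlocks A B B A * fromBlocks 1 (-1) 0 1 =
      fromBlocks (A + B) 0 B (A - B) := by
    simp only [fromBlocks_multiply]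
    congr 1 <;> noncomm_ring
  simpa [det_fromBlocks_zero₂₁, det_fromBlocks_zero₁₂] using congrArg det h

theorem charpoly_fromBlocks_self (A B : Matrix n n R) :
    (fromBlocks A B B A).charpoly = (A + B).charpoly * (A - B).charpoly := by
  rw [charpoly, charmatrix_fromBlocks, det_fromBlocks_self]
  simp only [charpoly, charmatrix, map_add, map_sub, RingHom.mapMatrix_apply]
  congr 2 <;> abel

theorem charpoly_vecMulVec_add_scalar [Nonempty n] (u v : n → R) (μ : R) :
    (vecMulVec u v + scalar n μ).charpoly =
      (X - C μ) ^ (Fintype.card n - 1) * (X - C (μ + u ⬝ᵥ v)) := by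
  have hcard : Fintype.card n = Fintype.card n - 1 + 1 :=
    (Nat.sub_add_cancel Fintype.card_pos).symm
  rw [← sub_neg_eq_add, ← map_neg, charpoly_sub_scalar, charpoly_vecMulVec, hcard]
  simp only [smul_eq_C_mul, sub_comp, mul_comp, pow_comp, X_comp, C_comp, C_neg, C_add,
    Nat.add_sub_cancel]
  ring

end Matrix

namespace SimpleGraph

variable {V : Type*} [Fintype V] {G : SimpleGraph V} [DecidableRel G.Adj]

theorem sum_subtype_adj {M : Type*} [AddCommMonoid M] (f : V → V → M) :
    ∑ p : {p : V × V // G.Adj p.1 p.2}, f p.1.1 p.1.2 =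
      ∑ a, ∑ b ∈ G.neighborFinset a, f a b := by
  simp_rw [neighborFinset_eq_filter, Finset.sum_filter]
  rw [← Fintype.sum_prod_type (f := fun p : V × V => if G.Adj p.1 p.2 then f p.1 p.2 else 0),
    ← Finset.sum_filter]
  exact (Finset.sum_subtype _ (by simp) (fun p : V × V => f p.1 p.2)).symm

theorem sum_boole_adj_eq_degree {M : Type*} [AddCommMonoidWithOne M] (a : V) :
    (∑ b, if G.Adj a b then 1 else 0 : M) = G.degree a := by
  rw [Finset.sum_boole, ← neighborFinset_eq_filter, card_neighborFinset_eq_degree]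

variable (G) in
theorem card_subtype_adj : Fintype.card {p : V × V // G.Adj p.1 p.2} = ∑ v, G.degree v := by
  simpa using sum_subtype_adj (G := G) (M := ℕ) fun _ _ => 1

variable [DecidableEq V] (G) (R : Type*)

-- Rows are the edges `(u, v)` of the bipartite double cover on `V ⊕ V`, with ends `inl u`
-- and `inr v`.
def symLiftIncMatrix [Zero R] [One R] : Matrix {p : V × V // G.Adj p.1 p.2} (V ⊕ V) R :=
  of fun p => Sum.elim (fun a => if p.1.1 = a then 1 else 0) (fun b => if p.1.2 = b then 1 else 0)

theorem symLiftIncMatrix_mul_transpose [Semiring R] [DecidableRel (symLift G).Adj] :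
    symLiftIncMatrix G R * (symLiftIncMatrix G R)ᵀ = (symLift G).adjMatrix R + scalar _ 2 := by
  ext p q
  simp only [mul_apply, transpose_apply, symLiftIncMatrix, of_apply, Fintype.sum_sum_type,
    Sum.elim_inl, Sum.elim_inr, mul_ite, mul_one, mul_zero, Finset.sum_ite_eq, Finset.mem_univ,
    if_true, Matrix.add_apply, adjMatrix_apply, scalar_apply, diagonal_apply]
  by_cases hpq : p = q
  · subst hpq; norm_num [symLift]
  · have : ¬ (p.1.1 = q.1.1 ∧ p.1.2 = q.1.2) := fun h => hpq (Subtype.ext (Prod.ext h.1 h.2))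
    by_cases h1 : p.1.1 = q.1.1 <;> by_cases h2 : p.1.2 = q.1.2 <;> simp_all [symLift]

theorem transpose_symLiftIncMatrix_mul [Semiring R] :
    (symLiftIncMatrix G R)ᵀ * symLiftIncMatrix G R =
      fromBlocks (diagonal fun v => (G.degree v : R)) (G.adjMatrix R) (G.adjMatrix R)
        (diagonal fun v => (G.degree v : R)) := by
  ext (a | a) (b | b) <;>
    simp only [mul_apply, transpose_apply, symLiftIncMatrix, of_apply, Sum.elim_inl, Sum.elim_inr,
      fromBlocks_apply₁₁, fromBlocks_apply₁₂, fromBlocks_apply₂₁, fromBlocks_apply₂₂]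
  · rw [sum_subtype_adj fun x _ => (if x = a then (1 : R) else 0) * (if x = b then 1 else 0)]
    by_cases hab : a = b <;> simp [hab, eq_comm]
  · rw [sum_subtype_adj fun x y => (if x = a then (1 : R) else 0) * (if y = b then 1 else 0)]
    rw [Fintype.sum_eq_single a fun x hx => by simp [hx]]
    simp
  · rw [sum_subtype_adj fun x y => (if y = a then (1 : R) else 0) * (if x = b then 1 else 0)]
    simp [adj_comm]
  · rw [sum_subtype_adj fun _ y => (if y = a then (1 : R) else 0) * (if y = b then 1 else 0)]
    by_cases hab : a = b
    · subst hab; simp [← sum_boole_adj_eq_degree (M := R), adj_comm]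
    · simp [hab, Ne.symm hab]

theorem transpose_symLiftIncMatrix_mulVec_one [Semiring R] :
    (symLiftIncMatrix G R)ᵀ *ᵥ 1 =
      Sum.elim (fun a => (G.degree a : R)) (fun a => G.degree a) := by
  ext (a | a) <;> simp only [mulVec, dotProduct, transpose_apply, symLiftIncMatrix, of_apply,
    Sum.elim_inl, Sum.elim_inr, Pi.one_apply, mul_one]
  · rw [sum_subtype_adj fun x _ => if x = a then (1 : R) else 0]
    simp
  · rw [sum_subtype_adj fun _ y => if y = a then (1 : R) else 0]
    simp [adj_comm, ← sum_boole_adj_eq_degree (M := R)]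

theorem symLift_degree_add_two [DecidableRel (symLift G).Adj]
    (p : {p : V × V // G.Adj p.1 p.2}) :
    (symLift G).degree p + 2 = G.degree p.1.1 + G.degree p.1.2 := by
  have h := congrFun (congrArg (· *ᵥ 1) (symLiftIncMatrix_mul_transpose G ℕ)) p
  simp only [← mulVec_mulVec, transpose_symLiftIncMatrix_mulVec_one, add_mulVec] at h
  rw [← card_neighborFinset_eq_degree, neighborFinset_eq_filter]
  simpa [mulVec, dotProduct, symLiftIncMatrix, Fintype.sum_sum_type] using h.symm

theorem card_subtype_completeGraph_adj {V : Type*} [Fintype V] [DecidableEq V] :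
    Fintype.card {p : V × V // (completeGraph V).Adj p.1 p.2} =
      Fintype.card V * (Fintype.card V - 1) := by
  rw [card_subtype_adj]
  simp [complete_graph_degree]

section CompleteGraph

variable {R : Type*} [CommRing R]

theorem charpoly_transpose_symLiftIncMatrix_completeGraph_mul {n : ℕ} [NeZero n] :
    ((symLiftIncMatrix (completeGraph (Fin n)) R)ᵀ *
      symLiftIncMatrix (completeGraph (Fin n)) R).charpoly =
      (X - C ((n : R) - 2)) ^ (n - 1) * (X - C (2 * ((n : R) - 1))) *
        ((X - C (n : R)) ^ (n - 1) * X) := by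
  have hplus : diagonal (fun _ => ((n - 1 : ℕ) : R)) + (of 1 - 1) =
      vecMulVec (fun _ : Fin n => (1 : R)) 1 + scalar _ ((n : R) - 2) := by
    ext i j
    by_cases h : i = j <;> simp [h, vecMulVec, one_apply, Nat.cast_sub NeZero.one_le]
    ring
  have hminus : diagonal (fun _ => ((n - 1 : ℕ) : R)) - (of 1 - 1) =
      vecMulVec (fun _ : Fin n => (-1 : R)) 1 + scalar _ (n : R) := by
    ext i j
    by_cases h : i = j <;>
      simp [h, vecMulVec, one_apply, Matrix.natCast_apply, Nat.cast_sub NeZero.one_le]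
    ring
  rw [transpose_symLiftIncMatrix_mul]
  simp only [complete_graph_degree, Fintype.card_fin, adjMatrix_completeGraph_eq_of_one_sub_one]
  rw [charpoly_fromBlocks_self, hplus, hminus, charpoly_vecMulVec_add_scalar,
    charpoly_vecMulVec_add_scalar]
  have hsum : ∀ c : R, (fun _ : Fin n => c) ⬝ᵥ 1 = n * c := fun c => by simp [dotProduct]
  rw [hsum, hsum, Fintype.card_fin, mul_neg_one, add_neg_cancel, C_0, sub_zero,
    show (n : R) - 2 + n * 1 = 2 * (n - 1) by ring]

theorem charpoly_adjMatrix_symLift_completeGraph {n : ℕ} (hn : 3 ≤ n)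
    [DecidableRel (symLift (completeGraph (Fin n))).Adj] :
    ((symLift (completeGraph (Fin n))).adjMatrix R).charpoly =
      (X - C (2 * ((n : R) - 2))) * (X - C ((n : R) - 2)) ^ (n - 1) *
        (X - C ((n : R) - 4)) ^ (n - 1) * (X - C (-2)) ^ (n * (n - 3) + 1) := by
  have : NeZero n := ⟨by omega⟩
  have hcard : Fintype.card {p : Fin n × Fin n // (completeGraph (Fin n)).Adj p.1 p.2} =
      n * (n - 3) + Fintype.card (Fin n ⊕ Fin n) := by
    obtain ⟨m, rfl⟩ := Nat.exists_eq_add_of_le hn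
    simp only [card_subtype_completeGraph_adj, Fintype.card_sum, Fintype.card_fin]
    rw [Nat.add_sub_cancel_left, show 3 + m - 1 = m + 2 by omega]
    ring
  have hshift : ∀ a : R, X + C 2 - C a = X - C (a - 2) := fun a => by rw [C_sub]; ring
  rw [eq_sub_of_add_eq (symLiftIncMatrix_mul_transpose _ R).symm, charpoly_sub_scalar,
    charpoly_mul_comm_of_le _ _ (hcard ▸ Nat.le_add_left _ _), hcard, Nat.add_sub_cancel,
    charpoly_transpose_symLiftIncMatrix_completeGraph_mul]
  simp only [mul_comp, pow_comp, sub_comp, X_comp, C_comp, hshift]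
  rw [C_neg, sub_neg_eq_add, show (n : R) - 2 - 2 = n - 4 by ring,
    show 2 * ((n : R) - 1) - 2 = 2 * (n - 2) by ring]
  ring

end CompleteGraph

end SimpleGraph

open scoped Classical in
/-- The symmetric lift of the complete graph `Kₙ` (for `n ≥ 4`) has `n(n-1)` vertices, is
regular of degree `2(n-2)`, and its adjacency spectrum is `2(n-2)` (once), `n-2` (`n-1` times),
`n-4` (`n-1` times) and `-2` (`n(n-3)+1` times). -/
theorem stmt_16 (n : ℕ) (hn : 4 ≤ n) :
    Fintype.card {p : Fin n × Fin n // (completeGraph (Fin n)).Adj p.1 p.2} = n * (n - 1) ∧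
    (symLift (completeGraph (Fin n))).IsRegularOfDegree (2 * (n - 2)) ∧
    ((symLift (completeGraph (Fin n))).adjMatrix ℝ).charpoly.roots =
      Multiset.replicate 1 (2 * ((n : ℝ) - 2)) +
      Multiset.replicate (n - 1) ((n : ℝ) - 2) +
      Multiset.replicate (n - 1) ((n : ℝ) - 4) +
      Multiset.replicate (n * (n - 3) + 1) (-2 : ℝ) := by
  refine ⟨by simpa using card_subtype_completeGraph_adj (V := Fin n), fun p => ?_, ?_⟩
  · have h := symLift_degree_add_two (completeGraph (Fin n)) p
    simp only [complete_graph_degree, Fintype.card_fin] at h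
    omega
  · rw [charpoly_adjMatrix_symLift_completeGraph (by omega),
      ← roots_multiset_prod_X_sub_C (_ + _)]
    simp only [Multiset.map_add, Multiset.map_replicate, Multiset.prod_add,
      Multiset.prod_replicate, pow_one]
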